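/- arXiv:1304.2132 — 6 statements merged into one kernel-verified Lean document; each statement's English description precedes it below -/
import Mathlib

section
/- Let P_n be the path graph on n ≥ 2 vertices and Δ(s) = s²(D − I) − sA + I its deformed Laplacian. For every real s with |s| < 1, the matrix Δ(s) is positive definite (equivalently, the system ẋ = −Δ(s)x is asymptotically stable). -/
open Matrix Filter

/-- The degree matrix of a graph given by its adjacency matrix: the diagonal matrix of
row sums of `A`. -/
noncomputable def degMat {V : Type} [Fintype V] [DecidableEq V] (A : Matrix V V ℝ) :
    Matrix V V ℝ :=
  Matrix.diagonal fun i => ∑ j, A i j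

/-- The deformed Laplacian `Δ(s) = s²(D − I) − sA + I`. -/
noncomputable def defLap {V : Type} [Fintype V] [DecidableEq V] (A : Matrix V V ℝ) (s : ℝ) :
    Matrix V V ℝ :=
  s ^ 2 • (degMat A - 1) - s • A + 1

/-- Adjacency matrix of the path graph `P_n` on vertices `0,…,n−1`:
`i` and `j` are adjacent iff `|i − j| = 1`. -/
noncomputable def pathAdj (n : ℕ) : Matrix (Fin n) (Fin n) ℝ :=
  fun i j => if (i : ℕ) + 1 = (j : ℕ) ∨ (j : ℕ) + 1 = (i : ℕ) then 1 else 0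

/-!
Completing squares along the path gives
`x ⬝ᵥ Δ(s) x = (1 - s²) x₀² + ∑ₖ (s xₖ - xₖ₊₁)²`.
For `s² < 1` every term is nonnegative, and if all of them vanish then `x₀ = 0` and
`xₖ₊₁ = s xₖ`, so `x = 0`.
-/

section

variable {V : Type} [Fintype V]

theorem dotProduct_mulVec_eq_sum (A : Matrix V V ℝ) (x : V → ℝ) :
    x ⬝ᵥ A *ᵥ x = ∑ i, ∑ j, A i j * (x i * x j) := by
  simp only [dotProduct, mulVec, Finset.mul_sum]
  exact Finset.sum_congr rfl fun _ _ => Finset.sum_congr rfl fun _ _ => by ring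

variable [DecidableEq V]

theorem Matrix.IsSymm.defLap {A : Matrix V V ℝ} (hA : A.IsSymm) (s : ℝ) : (defLap A s).IsSymm :=
  (((isSymm_diagonal _).sub isSymm_one).smul _ |>.sub (hA.smul s)).add isSymm_one

theorem dotProduct_degMat_mulVec (A : Matrix V V ℝ) (x : V → ℝ) :
    x ⬝ᵥ degMat A *ᵥ x = ∑ i, ∑ j, A i j * x i ^ 2 := by
  simp only [degMat, mulVec_diagonal, dotProduct, Finset.sum_mul, Finset.mul_sum]
  exact Finset.sum_congr rfl fun _ _ => Finset.sum_congr rfl fun _ _ => by ring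

theorem dotProduct_defLap_mulVec (A : Matrix V V ℝ) (s : ℝ) (x : V → ℝ) :
    x ⬝ᵥ defLap A s *ᵥ x =
      (1 - s ^ 2) * ∑ i, x i ^ 2 + ∑ i, ∑ j, A i j * (s ^ 2 * x i ^ 2 - s * (x i * x j)) := by
  have hone : x ⬝ᵥ (1 : Matrix V V ℝ) *ᵥ x = ∑ i, x i ^ 2 := by simp [dotProduct, sq]
  simp only [defLap, add_mulVec, sub_mulVec, smul_mulVec, dotProduct_add, dotProduct_sub,
    dotProduct_smul, smul_eq_mul, hone, dotProduct_degMat_mulVec, dotProduct_mulVec_eq_sum A,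
    mul_sub, Finset.sum_sub_distrib, Finset.mul_sum, sub_mul]
  simp only [mul_left_comm (A _ _), one_mul]
  ring

end

theorem Fin.sum_sum_ite_val_add_one_eq {M : Type*} [AddCommMonoid M] {m : ℕ}
    (g : Fin (m + 1) → Fin (m + 1) → M) :
    ∑ i : Fin (m + 1), ∑ j : Fin (m + 1), (if (i : ℕ) + 1 = j then g i j else 0) =
      ∑ k : Fin m, g k.castSucc k.succ := by
  have hsucc (i : Fin (m + 1)) (k : Fin m) : (i : ℕ) + 1 = k.succ ↔ i = k.castSucc := by
    simp [Fin.ext_iff]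
  rw [Finset.sum_comm, Fin.sum_univ_succ]
  simp only [Fin.val_zero, Nat.add_one_ne_zero, if_false, Finset.sum_const_zero, zero_add, hsucc,
    Finset.sum_ite_eq', Finset.mem_univ, if_true]

theorem Fin.eq_zero_of_succ_eq_mul_castSucc {R : Type*} [MulZeroClass R] {m : ℕ} {s : R}
    {x : Fin (m + 1) → R} (h0 : x 0 = 0) (hsucc : ∀ k : Fin m, x k.succ = s * x k.castSucc) :
    x = 0 := by
  funext i
  induction i using Fin.induction with
  | zero => exact h0
  | succ k ih => simp only [hsucc, ih, Pi.zero_apply, mul_zero]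

theorem pathAdj_isSymm (n : ℕ) : (pathAdj n).IsSymm :=
  IsSymm.ext fun _ _ => if_congr or_comm rfl rfl

theorem pathAdj_apply_mul (n : ℕ) (i j : Fin n) (y : ℝ) :
    pathAdj n i j * y = (if (i : ℕ) + 1 = j then y else 0) + (if (j : ℕ) + 1 = i then y else 0) := by
  unfold pathAdj
  split_ifs <;> first | omega | simp

theorem sum_pathAdj_mul (m : ℕ) (f : Fin (m + 1) → Fin (m + 1) → ℝ) :
    ∑ i, ∑ j, pathAdj (m + 1) i j * f i j =
      ∑ k : Fin m, (f k.castSucc k.succ + f k.succ k.castSucc) := by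
  simp only [pathAdj_apply_mul, Finset.sum_add_distrib, Fin.sum_sum_ite_val_add_one_eq]
  rw [Finset.sum_comm (f := fun i j : Fin (m + 1) => if (j : ℕ) + 1 = i then f i j else 0),
    Fin.sum_sum_ite_val_add_one_eq]

theorem dotProduct_defLap_pathAdj_mulVec (m : ℕ) (s : ℝ) (x : Fin (m + 1) → ℝ) :
    x ⬝ᵥ defLap (pathAdj (m + 1)) s *ᵥ x =
      (1 - s ^ 2) * x 0 ^ 2 + ∑ k : Fin m, (s * x k.castSucc - x k.succ) ^ 2 := by
  rw [dotProduct_defLap_mulVec, sum_pathAdj_mul, Fin.sum_univ_succ, mul_add, add_assoc,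
    Finset.mul_sum, ← Finset.sum_add_distrib]
  exact congrArg _ (Finset.sum_congr rfl fun _ _ => by ring)

theorem path_sum_sq_pos {m : ℕ} {s : ℝ} (hs : s ^ 2 < 1) {x : Fin (m + 1) → ℝ} (hx : x ≠ 0) :
    0 < (1 - s ^ 2) * x 0 ^ 2 + ∑ k : Fin m, (s * x k.castSucc - x k.succ) ^ 2 := by
  have hs' : 0 < 1 - s ^ 2 := sub_pos.mpr hs
  have hsum : 0 ≤ ∑ k : Fin m, (s * x k.castSucc - x k.succ) ^ 2 :=
    Finset.sum_nonneg fun _ _ => sq_nonneg _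
  refine (add_nonneg (by positivity) hsum).lt_of_ne fun h => hx ?_
  obtain ⟨h0, hk⟩ := (add_eq_zero_iff_of_nonneg (by positivity) hsum).mp h.symm
  rw [Finset.sum_eq_zero_iff_of_nonneg fun _ _ => sq_nonneg _] at hk
  exact Fin.eq_zero_of_succ_eq_mul_castSucc (by simpa [hs'.ne'] using h0) fun k =>
    (sub_eq_zero.mp (pow_eq_zero_iff two_ne_zero |>.mp (hk k (Finset.mem_univ k)))).symm

theorem path_defLap_posDef_general (n : ℕ) (s : ℝ) (hs : |s| < 1) :
    (defLap (pathAdj n) s).PosDef := by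
  refine .of_dotProduct_mulVec_pos (isHermitian_iff_isSymm.mpr ((pathAdj_isSymm n).defLap s))
    fun x hx => ?_
  obtain _ | m := n
  · exact absurd (Subsingleton.elim x 0) hx
  rw [star_trivial, dotProduct_defLap_pathAdj_mulVec]
  exact path_sum_sq_pos ((sq_lt_one_iff_abs_lt_one s).mpr hs) hx

/-- For the path graph `P_n` (`n ≥ 2`) and `|s| < 1`, `Δ(s)` is positive definite. -/
theorem path_defLap_posDef (n : ℕ) (hn : 2 ≤ n) (s : ℝ) (hs : |s| < 1) :
    (defLap (pathAdj n) s).PosDef :=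
  path_defLap_posDef_general n s hs
end

section
/- Let P_n be the path graph on n ≥ 2 vertices and Δ(s) = s²(D − I) − sA + I its deformed Laplacian. Then for every real s, det(Δ(s)) = 1 − s². -/
open Matrix Filter

/-!
Writing `S` for the subdiagonal shift and `C` for the matrix unit at the last vertex, the
deformed Laplacian of `P_n` factors as `Δ(s) = (1 - s S) (1 - s Sᵀ - s² C)`: since `S C = 0` and
`S Sᵀ = 1 - C₀` with `C₀` the matrix unit at the first vertex, the product is
`1 - s (S + Sᵀ) + s² (1 - C₀ - C) = 1 - s A + s² (D - 1)`.
Both factors are triangular, with diagonals `1, …, 1` and `1, …, 1, 1 - s²`.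
-/

section Shift

variable (R : Type*) (n : ℕ)

def subShift [Zero R] [One R] : Matrix (Fin n) (Fin n) R :=
  of fun i j => if (i : ℕ) = j + 1 then 1 else 0

def firstCorner [Zero R] [One R] : Matrix (Fin n) (Fin n) R :=
  diagonal fun i => if (i : ℕ) = 0 then 1 else 0

def lastCorner [Zero R] [One R] : Matrix (Fin n) (Fin n) R :=
  diagonal fun i => if (i : ℕ) + 1 = n then 1 else 0

variable {R n}

section Semiring

variable [Semiring R]

theorem sum_subShift_row (i : Fin n) :
    ∑ j, subShift R n i j = if (i : ℕ) = 0 then 0 else 1 := by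
  split_ifs with hi
  · refine Finset.sum_eq_zero fun j _ => ?_
    simp [subShift]
    omega
  · rw [Finset.sum_eq_single ⟨i - 1, by omega⟩]
    · simp [subShift]
      omega
    · intro j _ hj
      simp [subShift, Fin.ext_iff] at hj ⊢
      omega
    · simp

theorem sum_subShift_col (j : Fin n) :
    ∑ i, subShift R n i j = if (j : ℕ) + 1 = n then 0 else 1 := by
  split_ifs with hj
  · refine Finset.sum_eq_zero fun i _ => ?_
    simp [subShift]
    omega
  · rw [Finset.sum_eq_single ⟨j + 1, by omega⟩]
    · simp [subShift]
    · intro i _ hi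
      simp [subShift, Fin.ext_iff] at hi ⊢
      omega
    · simp

theorem subShift_mul_lastCorner : subShift R n * lastCorner R n = 0 := by
  ext i j
  simp [subShift, lastCorner, mul_diagonal]
  omega

end Semiring

theorem subShift_mul_transpose [Ring R] :
    subShift R n * (subShift R n)ᵀ = 1 - firstCorner R n := by
  ext i j
  rw [mul_apply, Matrix.sub_apply, firstCorner]
  by_cases hij : i = j
  · subst hij
    have hsq : ∀ k, subShift R n i k * subShift R n i k = subShift R n i k := fun k => by
      simp only [subShift, of_apply]
      split_ifs <;> simp
    simp only [transpose_apply, hsq, sum_subShift_row, one_apply_eq, diagonal_apply_eq]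
    split_ifs <;> simp
  · rw [one_apply_ne hij, diagonal_apply_ne _ hij, sub_zero]
    refine Finset.sum_eq_zero fun k _ => ?_
    simp only [subShift, transpose_apply, of_apply, mul_ite, mul_one, mul_zero]
    split_ifs <;> first | rfl | exact absurd (Fin.ext (by omega)) hij

section CommRing

variable [CommRing R]

theorem det_one_sub_smul_subShift (s : R) : (1 - s • subShift R n).det = 1 := by
  rw [det_of_isLowerTriangular _ ?_]
  · simp [subShift]
  · intro i j hij
    have hij : i < j := hij
    simp [subShift, one_apply_ne hij.ne, show (i : ℕ) ≠ j + 1 by omega]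

theorem det_one_sub_smul_transpose_subShift_sub_smul_lastCorner (hn : n ≠ 0) (s t : R) :
    (1 - s • (subShift R n)ᵀ - t • lastCorner R n).det = 1 - t := by
  obtain ⟨m, rfl⟩ := Nat.exists_eq_succ_of_ne_zero hn
  rw [det_of_isUpperTriangular ?_, Fin.prod_univ_castSucc]
  · simp only [subShift, lastCorner, Matrix.sub_apply, Matrix.smul_apply, one_apply_eq,
      diagonal_apply_eq, Fin.val_castSucc, Fin.val_last]
    rw [Finset.prod_eq_one fun x _ => by simp [x.isLt.ne], one_mul]
    simp
  · intro i j hij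
    have hij : j < i := hij
    simp [subShift, lastCorner, one_apply_ne hij.ne', diagonal_apply_ne _ hij.ne',
      show (j : ℕ) ≠ i + 1 by omega]

end CommRing

end Shift

theorem pathAdj_eq_subShift_add_transpose (n : ℕ) :
    pathAdj n = subShift ℝ n + (subShift ℝ n)ᵀ := by
  ext i j
  simp only [pathAdj, subShift, Matrix.add_apply, transpose_apply, of_apply]
  split_ifs <;> first | (exfalso; omega) | norm_num

theorem degMat_pathAdj (n : ℕ) :
    degMat (pathAdj n) = (1 - firstCorner ℝ n) + (1 - lastCorner ℝ n) := by
  rw [degMat, firstCorner, lastCorner, ← diagonal_one, diagonal_sub, diagonal_sub,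
    diagonal_add]
  congr 1
  ext i
  rw [pathAdj_eq_subShift_add_transpose]
  simp only [Matrix.add_apply, Finset.sum_add_distrib, transpose_apply, sum_subShift_row,
    sum_subShift_col]
  split_ifs <;> norm_num

theorem defLap_pathAdj_eq_mul (n : ℕ) (s : ℝ) :
    defLap (pathAdj n) s =
      (1 - s • subShift ℝ n) * (1 - s • (subShift ℝ n)ᵀ - s ^ 2 • lastCorner ℝ n) := by
  rw [defLap, degMat_pathAdj, pathAdj_eq_subShift_add_transpose]
  simp only [sub_mul, mul_sub, one_mul, mul_one, smul_mul_assoc, mul_smul_comm,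
    subShift_mul_transpose, subShift_mul_lastCorner, smul_zero]
  module

/-- For the path graph `P_n` (`n ≥ 2`), `det Δ(s) = 1 − s²`. -/
theorem path_defLap_det (n : ℕ) (hn : 2 ≤ n) (s : ℝ) :
    (defLap (pathAdj n) s).det = 1 - s ^ 2 := by
  rw [defLap_pathAdj_eq_mul, det_mul, det_one_sub_smul_subShift,
    det_one_sub_smul_transpose_subShift_sub_smul_lastCorner (by omega), one_mul]
end

section
/- Let P_n be the path graph on n ≥ 2 vertices, let Q = Δ(−1) = D + A be its signless Laplacian, and let k ∈ ℝⁿ be the alternating vector k_i = (−1)^i for i ∈ {0,…,n−1}. Then for every initial vector x₀ ∈ ℝⁿ, the matrix-exponential solution exp(−tQ)·x₀ of ẋ = −Qx converges, as t → ∞, to (1/n)·(kᵀx₀)·k. In particular the states split into two groups converging to the two values ±(1/n)kᵀx₀. -/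
open Matrix Filter

/-!
Writing `B` for the unoriented vertex–edge incidence matrix, the signless Laplacian is
`Q = D + A = B Bᵀ`. So `Q` is positive semidefinite, and `Q v = 0` iff `v a + v b = 0` along
every edge. On the path this forces `v` to be a multiple of the alternating vector `k`.
Diagonalising `Q`, each factor `e^{-tλ}` with `λ > 0` dies out as `t → ∞`, so `exp(-tQ)` tends
to the orthogonal projection onto `ker Q = ℝ k`. That projection sends `x₀` to
`(kᵀx₀ / kᵀk) k`, and `kᵀk = n`.
-/

open Topology

theorem Set.Finite.tendstoUniformlyOn {ι α β : Type*} [UniformSpace β] {F : ι → α → β}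
    {f : α → β} {l : Filter ι} {s : Set α} (hs : s.Finite)
    (h : ∀ x ∈ s, Tendsto (F · x) l (𝓝 (f x))) : TendstoUniformlyOn F f l s :=
  fun _u hu => (eventually_all_finite hs).2 fun x hx => Uniform.tendsto_nhds_right.1 (h x hx) hu

namespace Matrix

variable {m : Type*} [Fintype m] [DecidableEq m]

theorem exp_eq_cfc_exp {𝕜 : Type*} [RCLike 𝕜] {Q : Matrix m m 𝕜} (hQ : IsSelfAdjoint Q) :
    NormedSpace.exp Q = cfc Real.exp Q := by
  -- Any matrix norm will do: `exp` depends only on the topology, and every norm induces the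
  -- product topology.
  let _ := @Matrix.linftyOpNormedRing m 𝕜 _ _ _
  let _ := @Matrix.linftyOpNormedAlgebra ℝ m 𝕜 _ _ _ _
  exact (@CFC.real_exp_eq_normedSpace_exp _ _ _ _ IsHermitian.instContinuousFunctionalCalculus
    Q hQ).symm

/-- For Hermitian `Q` this is the orthogonal projection onto `ker Q`: since `0⁻¹ = 0`, the
function `1 - x⁻¹ * x` is the indicator of `{0}`. -/
noncomputable def kerProj (Q : Matrix m m ℝ) : Matrix m m ℝ :=
  cfc (fun x : ℝ => 1 - x⁻¹ * x) Q

variable {Q : Matrix m m ℝ}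

theorem kerProj_eq (hQ : IsSelfAdjoint Q) : kerProj Q = 1 - cfc (·⁻¹ : ℝ → ℝ) Q * Q := by
  have hfin := Q.finite_spectrum
  rw [kerProj, cfc_sub _ _ _ (hfin.continuousOn _) (hfin.continuousOn _), cfc_const_one ℝ Q,
    cfc_mul _ _ _ (hfin.continuousOn _), cfc_id' ℝ Q]

theorem mul_kerProj (hQ : IsSelfAdjoint Q) : Q * kerProj Q = 0 := by
  have hfin := Q.finite_spectrum
  have hzero : (fun x : ℝ => x * (1 - x⁻¹ * x)) = 0 := by
    ext x; rcases eq_or_ne x 0 with rfl | hx <;> simp [*]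
  rw [kerProj, ← cfc_zero ℝ Q, ← hzero,
    cfc_mul _ _ Q (hfin.continuousOn _) (hfin.continuousOn _), cfc_id' ℝ Q]

theorem kerProj_mulVec_of_mulVec_eq_zero (hQ : IsSelfAdjoint Q) {v : m → ℝ}
    (hv : Q *ᵥ v = 0) : kerProj Q *ᵥ v = v := by
  rw [kerProj_eq hQ, sub_mulVec, ← mulVec_mulVec, hv, mulVec_zero, one_mulVec, sub_zero]

theorem transpose_kerProj : (kerProj Q)ᵀ = kerProj Q := by
  rw [← conjTranspose_eq_transpose_of_trivial]
  exact cfc_predicate (p := IsSelfAdjoint) _ Q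

theorem PosSemidef.tendsto_exp_neg_smul (hQ : Q.PosSemidef) :
    Tendsto (fun t : ℝ => NormedSpace.exp ((-t) • Q)) atTop (𝓝 (kerProj Q)) := by
  have hsa : IsSelfAdjoint Q := hQ.isHermitian
  have hexp (t : ℝ) : NormedSpace.exp ((-t) • Q) = cfc (fun x => Real.exp (-t * x)) Q := by
    rw [exp_eq_cfc_exp ((IsSelfAdjoint.all _).smul hsa), ← cfc_comp_smul (-t) Real.exp Q]
    rfl
  simp only [hexp]
  refine tendsto_cfc_fun (Q.finite_spectrum.tendstoUniformlyOn fun x hx => ?_)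
    (.of_forall fun _ => Q.finite_spectrum.continuousOn _)
  rw [hQ.isHermitian.spectrum_real_eq_range_eigenvalues] at hx
  obtain ⟨i, rfl⟩ := hx
  rcases (hQ.eigenvalues_nonneg i).eq_or_lt with h | h
  · simp [← h]
  · rw [inv_mul_cancel₀ h.ne', sub_self]
    exact Real.tendsto_exp_atBot.comp (tendsto_neg_atTop_atBot.atBot_mul_const h)

theorem PosSemidef.tendsto_exp_neg_smul_mulVec_of_ker_eq_span (hQ : Q.PosSemidef)
    {k : m → ℝ} (hk : LinearMap.ker Q.mulVecLin = ℝ ∙ k) (x : m → ℝ) :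
    Tendsto (fun t : ℝ => NormedSpace.exp ((-t) • Q) *ᵥ x) atTop
      (𝓝 ((k ⬝ᵥ x / k ⬝ᵥ k) • k)) := by
  have hsa : IsSelfAdjoint Q := hQ.isHermitian
  have hker (v : m → ℝ) : Q *ᵥ v = 0 ↔ ∃ c : ℝ, c • k = v := by
    rw [← Submodule.mem_span_singleton, ← hk, LinearMap.mem_ker, mulVecLin_apply]
  have hlim : Tendsto (fun t : ℝ => NormedSpace.exp ((-t) • Q) *ᵥ x) atTop
      (𝓝 (kerProj Q *ᵥ x)) :=
    ((continuous_id.matrix_mulVec continuous_const :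
      Continuous fun M : Matrix m m ℝ => M *ᵥ x).tendsto _).comp hQ.tendsto_exp_neg_smul
  suffices kerProj Q *ᵥ x = (k ⬝ᵥ x / k ⬝ᵥ k) • k from this ▸ hlim
  obtain ⟨c, hc⟩ := (hker (kerProj Q *ᵥ x)).1 (by
    rw [mulVec_mulVec, mul_kerProj hsa, zero_mulVec])
  have hkx : k ⬝ᵥ (kerProj Q *ᵥ x) = k ⬝ᵥ x := by
    rw [dotProduct_mulVec, ← mulVec_transpose, transpose_kerProj,
      kerProj_mulVec_of_mulVec_eq_zero hsa ((hker k).2 ⟨1, one_smul _ _⟩)]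
  rw [← hc] at hkx ⊢
  rw [dotProduct_smul, smul_eq_mul] at hkx
  rcases eq_or_ne k 0 with rfl | hk0
  · simp
  · rw [← hkx, mul_div_cancel_right₀ _ (dotProduct_self_eq_zero.not.2 hk0)]

end Matrix

theorem defLap_neg_one {V : Type} [Fintype V] [DecidableEq V] (A : Matrix V V ℝ) :
    defLap A (-1) = degMat A + A := by
  simp only [defLap]
  norm_num
  abel

namespace SimpleGraph

section

variable {V : Type} [Fintype V] [DecidableEq V] (G : SimpleGraph V) [DecidableRel G.Adj]

theorem degMat_adjMatrix : degMat (G.adjMatrix ℝ) = diagonal fun v => (G.degree v : ℝ) := by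
  ext v w
  simp only [degMat, diagonal_apply]
  split_ifs with hvw
  · subst hvw
    simpa [mulVec, dotProduct] using G.adjMatrix_mulVec_const_apply (a := (1 : ℝ)) (v := v)
  · rfl

theorem defLap_adjMatrix_neg_one :
    defLap (G.adjMatrix ℝ) (-1) = G.incMatrix ℝ * (G.incMatrix ℝ)ᵀ := by
  rw [defLap_neg_one, degMat_adjMatrix, incMatrix_mul_transpose]
  ext v w
  rcases eq_or_ne v w with rfl | h <;> simp [adjMatrix_apply, *]

theorem posSemidef_defLap_adjMatrix_neg_one : (defLap (G.adjMatrix ℝ) (-1)).PosSemidef := by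
  rw [defLap_adjMatrix_neg_one, ← conjTranspose_eq_transpose_of_trivial]
  exact posSemidef_self_mul_conjTranspose _

theorem incMatrix_transpose_mulVec_of_adj {a b : V} (h : G.Adj a b) (v : V → ℝ) :
    ((G.incMatrix ℝ)ᵀ *ᵥ v) s(a, b) = v a + v b := by
  have hinc (c : V) : G.incMatrix ℝ c s(a, b) = if c = a ∨ c = b then 1 else 0 := by
    simp [incMatrix_apply', incidenceSet, h]
  simp only [mulVec, dotProduct, transpose_apply, hinc, ite_mul, one_mul, zero_mul]
  rw [Finset.sum_ite, Finset.sum_const_zero, add_zero, Finset.filter_or, Finset.filter_eq',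
    Finset.filter_eq', Finset.sum_union (by simpa using h.ne)]
  simp

theorem defLap_adjMatrix_neg_one_mulVec_eq_zero_iff (v : V → ℝ) :
    defLap (G.adjMatrix ℝ) (-1) *ᵥ v = 0 ↔ ∀ a b, G.Adj a b → v a + v b = 0 := by
  rw [defLap_adjMatrix_neg_one, ← conjTranspose_eq_transpose_of_trivial,
    self_mul_conjTranspose_mulVec_eq_zero, conjTranspose_eq_transpose_of_trivial]
  refine ⟨fun h a b hab => ?_, fun h => funext fun e => ?_⟩
  · rw [← incMatrix_transpose_mulVec_of_adj G hab, h, Pi.zero_apply]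
  · induction e using Sym2.ind with
    | _ a b =>
    by_cases hab : G.Adj a b
    · rw [incMatrix_transpose_mulVec_of_adj G hab, h a b hab, Pi.zero_apply]
    · refine Finset.sum_eq_zero fun c _ => ?_
      change G.incMatrix ℝ c s(a, b) * v c = 0
      rw [G.incMatrix_of_notMem_incidenceSet fun hc => hab hc.1, zero_mul]

end

instance (n : ℕ) : DecidableRel (pathGraph n).Adj := fun _ _ => decidable_of_iff' _ pathGraph_adj

theorem pathAdj_eq_adjMatrix (n : ℕ) : pathAdj n = (pathGraph n).adjMatrix ℝ := by
  ext i j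
  simp [pathAdj, adjMatrix_apply, pathGraph_adj]

end SimpleGraph

open SimpleGraph

noncomputable def alternatingVec (n : ℕ) : Fin n → ℝ := fun i => (-1) ^ (i : ℕ)

theorem alternatingVec_dotProduct_self (n : ℕ) :
    alternatingVec n ⬝ᵥ alternatingVec n = n := by
  simp [dotProduct, alternatingVec, ← pow_add, ← two_mul, pow_mul]

theorem eq_smul_alternatingVec {n : ℕ} {v : Fin (n + 1) → ℝ}
    (h : ∀ i j : Fin (n + 1), (i : ℕ) + 1 = j → v i + v j = 0) :
    v 0 • alternatingVec (n + 1) = v := by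
  funext ⟨i, hi⟩
  induction i with
  | zero => simp [alternatingVec]
  | succ i ih =>
    have hsucc := h ⟨i, by omega⟩ ⟨i + 1, hi⟩ rfl
    simp only [Pi.smul_apply, smul_eq_mul, alternatingVec, pow_succ] at ih ⊢
    linarith [ih (by omega)]

theorem ker_mulVecLin_defLap_pathAdj_neg_one (n : ℕ) :
    LinearMap.ker (defLap (pathAdj n) (-1)).mulVecLin = ℝ ∙ alternatingVec n := by
  ext v
  rw [LinearMap.mem_ker, mulVecLin_apply, pathAdj_eq_adjMatrix,
    defLap_adjMatrix_neg_one_mulVec_eq_zero_iff, Submodule.mem_span_singleton]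
  simp only [pathGraph_adj]
  constructor
  · intro h
    cases n with
    | zero => exact ⟨0, Subsingleton.elim _ _⟩
    | succ n => exact ⟨v 0, eq_smul_alternatingVec fun i j hij => h i j (.inl hij)⟩
  · rintro ⟨c, rfl⟩ a b (hab | hab) <;> simp [alternatingVec, ← hab, pow_succ]

theorem path_signless_laplacian_limit_general (n : ℕ) (x₀ : Fin n → ℝ) :
    Tendsto (fun t : ℝ => NormedSpace.exp ((-t) • defLap (pathAdj n) (-1)) *ᵥ x₀) atTop
      (nhds ((1 / (n : ℝ) * ((fun i : Fin n => (-1 : ℝ) ^ (i : ℕ)) ⬝ᵥ x₀)) •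
        fun i : Fin n => (-1 : ℝ) ^ (i : ℕ))) := by
  have hQ : (defLap (pathAdj n) (-1)).PosSemidef :=
    pathAdj_eq_adjMatrix n ▸ posSemidef_defLap_adjMatrix_neg_one _
  have h := hQ.tendsto_exp_neg_smul_mulVec_of_ker_eq_span
    (ker_mulVecLin_defLap_pathAdj_neg_one n) x₀
  rwa [alternatingVec_dotProduct_self, div_eq_inv_mul, ← one_div] at h

/-- For the path graph `P_n` (`n ≥ 2`), with `Q = Δ(−1) = D + A` the signless Laplacian
and `k` the alternating vector `kᵢ = (−1)^i`, the solution `exp(−tQ) x₀` of `ẋ = −Qx`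
converges as `t → ∞` to `(1/n)(kᵀx₀) k`. -/
theorem path_signless_laplacian_limit (n : ℕ) (hn : 2 ≤ n) (x₀ : Fin n → ℝ) :
    Tendsto (fun t : ℝ => NormedSpace.exp ((-t) • defLap (pathAdj n) (-1)) *ᵥ x₀) atTop
      (nhds ((1 / (n : ℝ) * ((fun i : Fin n => (-1 : ℝ) ^ (i : ℕ)) ⬝ᵥ x₀)) •
        fun i : Fin n => (-1 : ℝ) ^ (i : ℕ))) :=
  path_signless_laplacian_limit_general n x₀
end

section
/- Let C_n be the cycle graph on n > 2 vertices and Δ(s) = s²(D − I) − sA + I its deformed Laplacian, viewed as a complex matrix. For each k ∈ {0,…,n−1}, the complex vector v with entries v_j = exp(2πi·kj/n), j ∈ {0,…,n−1}, satisfies Δ(s)·v = (s² − 2cos(2πk/n)s + 1)·v. Hence the eigenvalues of −Δ(s) are exactly the numbers −s² + 2cos(2π(k)/n)s − 1, k ∈ {0,…,n−1}. -/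
/-!
The adjacency matrix of `C_n` is `P + P⁻¹`, where `P` is the cyclic shift. A geometric vector
`j ↦ ω ^ j` with `ω ^ n = 1` is an eigenvector of `P` with eigenvalue `ω`, hence of the
adjacency matrix with eigenvalue `ω + ω⁻¹`, which is `2 cos (2πk/n)` for `ω = exp (2πik/n)`.
Since `C_n` is 2-regular, `Δ(s) = (s² + 1) I − s A` has the same eigenvectors. The `n` vectors
`k ↦ (ζ^k)^j`, `ζ = exp (2πi/n)`, form an invertible Vandermonde matrix, so they are an
eigenbasis and `Δ(s)` has no further eigenvalues.
-/

open Matrix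

/-- Adjacency matrix (over `ℂ`) of the cycle graph `C_n` on vertices `0,…,n−1` (mod `n`):
`i` and `j` are adjacent iff `i − j ≡ ±1 (mod n)`. -/
noncomputable def cycAdjC (n : ℕ) : Matrix (Fin n) (Fin n) ℂ :=
  fun i j => if ((i : ℕ) + 1) % n = (j : ℕ) ∨ ((j : ℕ) + 1) % n = (i : ℕ) then 1 else 0

/-- The degree matrix of the cycle graph over `ℂ`. -/
noncomputable def cycDegC (n : ℕ) : Matrix (Fin n) (Fin n) ℂ :=
  Matrix.diagonal fun i => ∑ j, cycAdjC n i j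

/-- The deformed Laplacian `Δ(s) = s²(D − I) − sA + I` of the cycle graph, viewed as a
complex matrix (`s` a real parameter). -/
noncomputable def cycDefLapC (n : ℕ) (s : ℝ) : Matrix (Fin n) (Fin n) ℂ :=
  (s : ℂ) ^ 2 • (cycDegC n - 1) - (s : ℂ) • cycAdjC n + 1

namespace Matrix

variable {K ι : Type*} [Field K] [Fintype ι] [DecidableEq ι]

theorem exists_ne_zero_mulVec_eq_smul_iff_of_isUnit {M V : Matrix ι ι K} {μ : ι → K}
    (hV : IsUnit V) (hM : ∀ k, M *ᵥ V.col k = μ k • V.col k) (t : K) :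
    (∃ w, w ≠ 0 ∧ M *ᵥ w = t • w) ↔ ∃ k, t = μ k := by
  have hMV : M * V = V * diagonal μ := by
    ext i k
    rw [mul_diagonal, mul_apply, mul_comm]
    exact congrFun (hM k) i
  constructor
  · rintro ⟨w, hw0, hw⟩
    obtain ⟨c, rfl⟩ := mulVec_surjective_iff_isUnit.mpr hV w
    have hc0 : c ≠ 0 := by rintro rfl; exact hw0 (mulVec_zero V)
    have hc : diagonal μ *ᵥ c = t • c := mulVec_injective_iff_isUnit.mpr hV <| by
      rw [mulVec_mulVec, ← hMV, ← mulVec_mulVec, hw, mulVec_smul]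
    obtain ⟨k, hk⟩ := Function.ne_iff.mp hc0
    refine ⟨k, mul_right_cancel₀ hk ?_⟩
    simpa [mulVec_diagonal] using (congrFun hc k).symm
  · rintro ⟨k, rfl⟩
    refine ⟨V.col k, fun h => ?_, hM k⟩
    rw [← mulVec_single_one, ← mulVec_zero V] at h
    simpa using congrFun (mulVec_injective_iff_isUnit.mpr hV h) k

end Matrix

theorem val_finRotate {n : ℕ} (i : Fin n) : (finRotate n i : ℕ) = ((i : ℕ) + 1) % n := by
  have := i.neZero
  rw [finRotate_apply, Fin.val_add, Fin.val_one', Nat.add_mod_mod]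

theorem pow_val_finRotate {M : Type*} [Monoid M] {n : ℕ} {ω : M} (hω : ω ^ n = 1) (i : Fin n) :
    ω ^ (finRotate n i : ℕ) = ω * ω ^ (i : ℕ) := by
  rw [val_finRotate, ← pow_eq_pow_mod _ hω, pow_succ']

theorem cycAdjC_apply (n : ℕ) (i j : Fin n) :
    cycAdjC n i j = if j = finRotate n i ∨ finRotate n j = i then 1 else 0 := by
  simp only [cycAdjC, Fin.ext_iff, val_finRotate, eq_comm]

theorem cycAdjC_mulVec_apply {n : ℕ} (hn : 2 < n) (f : Fin n → ℂ) (i : Fin n) :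
    (cycAdjC n *ᵥ f) i = f (finRotate n i) + f ((finRotate n).symm i) := by
  have hne : finRotate n i ≠ (finRotate n).symm i := by
    rw [Ne, Equiv.eq_symm_apply, Fin.ext_iff, val_finRotate, val_finRotate, Nat.mod_add_mod]
    have hi := i.isLt
    rcases lt_or_ge ((i : ℕ) + 1 + 1) n with h | h
    · rw [Nat.mod_eq_of_lt h]; omega
    · rw [Nat.mod_eq_sub_mod h, Nat.mod_eq_of_lt (by omega)]; omega
  rw [mulVec, dotProduct, Fintype.sum_eq_add _ _ hne]
  · simp only [cycAdjC_apply, Equiv.apply_symm_apply, true_or, or_true, if_true, one_mul]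
  · rintro j ⟨h1, h2⟩
    rw [cycAdjC_apply, if_neg (by rw [← Equiv.eq_symm_apply]; tauto), zero_mul]

theorem cycAdjC_mulVec_pow {n : ℕ} (hn : 2 < n) {ω : ℂ} (hω : ω ^ n = 1) :
    cycAdjC n *ᵥ (fun j : Fin n => ω ^ (j : ℕ)) = (ω + ω⁻¹) • fun j : Fin n => ω ^ (j : ℕ) := by
  have hω0 : ω ≠ 0 := by rintro rfl; simp [zero_pow (by omega : n ≠ 0)] at hω
  funext i
  obtain ⟨j, rfl⟩ := (finRotate n).surjective i
  rw [cycAdjC_mulVec_apply hn, Equiv.symm_apply_apply, Pi.smul_apply, smul_eq_mul,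
    pow_val_finRotate hω, pow_val_finRotate hω]
  field_simp

-- The row sums of `cycAdjC n` are its action on the constant vector, the case `ω = 1` above.
theorem cycDegC_eq {n : ℕ} (hn : 2 < n) : cycDegC n = 2 := by
  have h := cycAdjC_mulVec_pow hn (one_pow n)
  simp only [one_pow, inv_one, one_add_one_eq_two] at h
  rw [cycDegC, ← diagonal_ofNat]
  congr 1
  funext i
  simpa [mulVec, dotProduct] using congrFun h i

theorem cycDefLapC_eq {n : ℕ} (hn : 2 < n) (s : ℝ) :
    cycDefLapC n s = ((s : ℂ) ^ 2 + 1) • 1 - (s : ℂ) • cycAdjC n := by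
  rw [cycDefLapC, cycDegC_eq hn, add_smul, one_smul]
  norm_num
  abel

theorem cycDefLapC_mulVec_pow {n : ℕ} (hn : 2 < n) (s : ℝ) {ω : ℂ} (hω : ω ^ n = 1) :
    cycDefLapC n s *ᵥ (fun j : Fin n => ω ^ (j : ℕ))
      = ((s : ℂ) ^ 2 - (ω + ω⁻¹) * s + 1) • fun j : Fin n => ω ^ (j : ℕ) := by
  rw [cycDefLapC_eq hn, sub_mulVec, smul_mulVec, smul_mulVec, one_mulVec,
    cycAdjC_mulVec_pow hn hω, smul_smul, ← sub_smul]
  congr 1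
  ring

theorem Complex.exp_two_pi_I_mul_div (n k j : ℕ) :
    Complex.exp (2 * Real.pi * Complex.I * k * j / n)
      = (Complex.exp (2 * Real.pi * Complex.I / n) ^ k) ^ j := by
  rw [← Complex.exp_nat_mul, ← Complex.exp_nat_mul]
  congr 1
  ring

theorem Complex.exp_two_pi_I_div_pow_add_inv (n k : ℕ) :
    Complex.exp (2 * Real.pi * Complex.I / n) ^ k
        + (Complex.exp (2 * Real.pi * Complex.I / n) ^ k)⁻¹ = 2 * Real.cos (2 * Real.pi * k / n) := by
  rw [← Complex.exp_nat_mul, ← Complex.exp_neg, Complex.ofReal_cos, Complex.two_cos]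
  push_cast
  ring_nf

/-- For the cycle graph `C_n` (`n > 2`): for each `k`, the Fourier vector
`v_j = exp(2πi·kj/n)` satisfies `Δ(s) v = (s² − 2cos(2πk/n)s + 1) v`; hence the
eigenvalues of `−Δ(s)` are exactly the numbers `−s² + 2cos(2πk/n)s − 1`, `k ∈ {0,…,n−1}`. -/
theorem cycle_defLap_eigen (n : ℕ) (hn : 2 < n) (s : ℝ) :
    (∀ k : Fin n,
      cycDefLapC n s *ᵥ
          (fun j : Fin n =>
            Complex.exp (2 * (Real.pi : ℂ) * Complex.I * ((k : ℕ) : ℂ) * ((j : ℕ) : ℂ) / (n : ℂ)))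
        = (((s : ℂ) ^ 2 - 2 * ((Real.cos (2 * Real.pi * (k : ℕ) / (n : ℝ))) : ℂ) * (s : ℂ) + 1)) •
            fun j : Fin n =>
              Complex.exp (2 * (Real.pi : ℂ) * Complex.I * ((k : ℕ) : ℂ) * ((j : ℕ) : ℂ) / (n : ℂ))) ∧
    (∀ t : ℂ,
      (∃ w : Fin n → ℂ, w ≠ 0 ∧ (-(cycDefLapC n s)) *ᵥ w = t • w) ↔
        ∃ k : Fin n,
          t = -(s : ℂ) ^ 2 + 2 * ((Real.cos (2 * Real.pi * (k : ℕ) / (n : ℝ))) : ℂ) * (s : ℂ) - 1) := by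
  set ζ := Complex.exp (2 * Real.pi * Complex.I / n)
  have hζ : IsPrimitiveRoot ζ n := Complex.isPrimitiveRoot_exp n (by omega)
  have heigen (k : Fin n) : cycDefLapC n s *ᵥ (fun j : Fin n => (ζ ^ (k : ℕ)) ^ (j : ℕ))
      = ((s : ℂ) ^ 2 - 2 * Real.cos (2 * Real.pi * (k : ℕ) / n) * s + 1) •
          fun j : Fin n => (ζ ^ (k : ℕ)) ^ (j : ℕ) := by
    have hroot : (ζ ^ (k : ℕ)) ^ n = 1 := by rw [pow_right_comm, hζ.pow_eq_one, one_pow]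
    rw [cycDefLapC_mulVec_pow hn s hroot, Complex.exp_two_pi_I_div_pow_add_inv]
  simp only [Complex.exp_two_pi_I_mul_div]
  refine ⟨heigen, fun t => ?_⟩
  set V := vandermonde fun j : Fin n => ζ ^ (j : ℕ)
  have hV : IsUnit V := by
    rw [isUnit_iff_isUnit_det, isUnit_iff_ne_zero, det_vandermonde_ne_zero_iff]
    exact fun i j h => Fin.ext (hζ.pow_inj i.isLt j.isLt h)
  refine exists_ne_zero_mulVec_eq_smul_iff_of_isUnit hV (fun k => ?_) t
  have hcol : V.col k = fun j : Fin n => (ζ ^ (k : ℕ)) ^ (j : ℕ) := by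
    funext j
    simp only [col_apply, V, vandermonde_apply, ← pow_mul, mul_comm]
  rw [hcol, neg_mulVec, heigen, ← neg_smul]
  congr 1
  ring
end

section
/- Let K_n be the complete graph on n > 2 vertices and Δ(s) = s²(D − I) − sA + I its deformed Laplacian. Then Δ(s) is positive definite for every real s with s > 1 or s < 1/(n−2), and for every s in the open interval (1/(n−2), 1) there exists a vector v with vᵀΔ(s)v < 0 (so the system ẋ = −Δ(s)x is asymptotically stable in the first case and unstable in the second). -/
open Matrix Filter

noncomputable def compAdj (n : ℕ) : Matrix (Fin n) (Fin n) ℝ :=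
  fun i j => if i ≠ j then 1 else 0

section CompleteGraph

variable {V : Type} [Fintype V] [DecidableEq V]

lemma compAdj_eq_of_one_sub_one (n : ℕ) : compAdj n = of 1 - 1 := by
  ext i j
  by_cases h : i = j <;> simp [compAdj, one_apply, h]

lemma degMat_of_one_sub_one :
    degMat (of 1 - 1 : Matrix V V ℝ) = ((Fintype.card V : ℝ) - 1) • 1 := by
  ext i j
  simp [degMat, diagonal_apply, one_apply, Finset.sum_sub_distrib]

lemma defLap_of_one_sub_one (s : ℝ) :
    defLap (of 1 - 1 : Matrix V V ℝ) s
      = (s ^ 2 * ((Fintype.card V : ℝ) - 2) + s + 1) • 1 - s • of 1 := by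
  rw [defLap, degMat_of_one_sub_one]
  module

end CompleteGraph

section AllOnes

variable {V R : Type} [Fintype V]

lemma dotProduct_of_one_mulVec [CommSemiring R] (v : V → R) :
    v ⬝ᵥ (of 1 *ᵥ v) = (∑ i, v i) ^ 2 := by
  simp [dotProduct, mulVec, sq, Finset.sum_mul, mul_comm]

lemma dotProduct_smul_one_sub_smul_of_one_mulVec [CommRing R] [DecidableEq V] (a s : R)
    (v : V → R) :
    v ⬝ᵥ ((a • 1 - s • of 1) *ᵥ v) = a * (v ⬝ᵥ v) - s * (∑ i, v i) ^ 2 := by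
  rw [sub_mulVec, smul_mulVec, smul_mulVec, one_mulVec, dotProduct_sub, dotProduct_smul,
    dotProduct_smul, dotProduct_of_one_mulVec, smul_eq_mul, smul_eq_mul]

variable [DecidableEq V]

lemma posDef_smul_one_sub_smul_of_one {a s : ℝ} (ha : 0 < a)
    (has : s * Fintype.card V < a) : (a • 1 - s • of 1 : Matrix V V ℝ).PosDef := by
  refine posDef_iff_dotProduct_mulVec.mpr ⟨?_, fun x hx => ?_⟩
  · ext i j
    by_cases h : i = j <;> simp [one_apply, h, eq_comm]
  have hxx : 0 < x ⬝ᵥ x := by simpa using dotProduct_star_self_pos_iff.mpr hx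
  rw [star_trivial, dotProduct_smul_one_sub_smul_of_one_mulVec]
  rcases le_or_gt s 0 with hs | hs
  · nlinarith [sq_nonneg (∑ i, x i)]
  · have hCS : (∑ i, x i) ^ 2 ≤ Fintype.card V * (x ⬝ᵥ x) := by
      simpa [dotProduct, sq] using sq_sum_le_card_mul_sum_sq (s := Finset.univ) (f := x)
    nlinarith [mul_le_mul_of_nonneg_left hCS hs.le]

lemma exists_dotProduct_smul_one_sub_smul_of_one_mulVec_neg [Nonempty V] {a s : ℝ}
    (has : a < s * Fintype.card V) :
    ∃ v : V → ℝ, v ⬝ᵥ ((a • 1 - s • of 1) *ᵥ v) < 0 := by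
  refine ⟨fun _ => 1, ?_⟩
  have hV : (0 : ℝ) < Fintype.card V := by exact_mod_cast Fintype.card_pos
  rw [dotProduct_smul_one_sub_smul_of_one_mulVec]
  simp only [dotProduct, mul_one, Finset.sum_const, Finset.card_univ, nsmul_eq_mul]
  nlinarith

end AllOnes

/-- For the complete graph `K_n` (`n > 2`): `Δ(s)` is positive definite for `s > 1` or
`s < 1/(n−2)`, and for `1/(n−2) < s < 1` there is `v` with `vᵀ Δ(s) v < 0`. -/
theorem complete_defLap_stability (n : ℕ) (hn : 2 < n) (s : ℝ) :
    ((1 < s ∨ s < 1 / ((n : ℝ) - 2)) → (defLap (compAdj n) s).PosDef) ∧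
    (1 / ((n : ℝ) - 2) < s → s < 1 →
      ∃ v : Fin n → ℝ, v ⬝ᵥ (defLap (compAdj n) s *ᵥ v) < 0) := by
  have hn3 : (3 : ℝ) ≤ n := by exact_mod_cast hn
  have hn2 : (0 : ℝ) < n - 2 := by linarith
  have : Nonempty (Fin n) := ⟨⟨0, by omega⟩⟩
  have hfactor : s ^ 2 * ((n : ℝ) - 2) + s + 1 - s * n = (s * (n - 2) - 1) * (s - 1) := by
    ring
  rw [compAdj_eq_of_one_sub_one, defLap_of_one_sub_one, Fintype.card_fin]
  refine ⟨fun hs => posDef_smul_one_sub_smul_of_one ?_ ?_,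
    fun hlow hup => exists_dotProduct_smul_one_sub_smul_of_one_mulVec_neg ?_⟩
  · nlinarith [sq_nonneg (2 * s + 1), mul_nonneg (sq_nonneg s) (sub_nonneg.mpr hn3)]
  · rw [Fintype.card_fin]
    rcases hs with hs | hs
    · nlinarith [mul_pos (show 0 < s * (n - 2) - 1 by nlinarith) (sub_pos.mpr hs)]
    · rw [lt_div_iff₀ hn2] at hs
      have hs1 : s < 1 := by nlinarith
      nlinarith [mul_pos_of_neg_of_neg (sub_neg.mpr hs) (sub_neg.mpr hs1)]
  · rw [Fintype.card_fin]
    rw [div_lt_iff₀ hn2] at hlow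
    nlinarith [mul_neg_of_pos_of_neg (sub_pos.mpr hlow) (sub_neg.mpr hup)]
end

section
/- Let K_{m,n} be the complete bipartite graph with parts of sizes m ≥ 2 and n ≥ 2, and Δ(s) = s²(D − I) − sA + I its deformed Laplacian (an (m+n)×(m+n) matrix). Then Δ(s) is positive definite for every real s with |s| > 1 or |s| < 1/√((m−1)(n−1)), and for every s with 1/√((m−1)(n−1)) < |s| < 1 there exists a vector v with vᵀΔ(s)v < 0 (so the system ẋ = −Δ(s)x is asymptotically stable in the first case and unstable in the second). -/
open Matrix Filter

/-- Adjacency matrix of the complete bipartite graph `K_{m,n}` on `Fin m ⊕ Fin n`: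
two vertices are adjacent iff they lie in different parts. -/
noncomputable def bipAdj (m n : ℕ) : Matrix (Fin m ⊕ Fin n) (Fin m ⊕ Fin n) ℝ :=
  fun u v => if u.isLeft ≠ v.isLeft then 1 else 0

/-!
Writing `v = (x, y)` along the two parts, `vᵀ Δ(s) v = a ‖x‖² + b ‖y‖² − 2 s (∑ x) (∑ y)` with
`a = s²(n − 1) + 1` and `b = s²(m − 1) + 1`. Cauchy–Schwarz, `(∑ x)² ≤ m ‖x‖²`, reduces positivity
to that of a `2 × 2` form of determinant `ab − s²mn = ((m − 1)(n − 1)s² − 1)(s² − 1)`. When this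
determinant is negative, the vector equal to `b` on the first part and to `s m` on the second
gives the value `m b (ab − s²mn) < 0`.
-/

open Finset

section

variable {V : Type} [Fintype V] [DecidableEq V]

lemma defLap_isHermitian {A : Matrix V V ℝ} (hA : A.IsSymm) (s : ℝ) :
    (defLap A s).IsHermitian :=
  isHermitian_iff_isSymm.mpr <|
    ((((isSymm_diagonal _).sub isSymm_one).smul _).sub (hA.smul s)).add isSymm_one

lemma defLap_mulVec_apply (A : Matrix V V ℝ) (s : ℝ) (v : V → ℝ) (u : V) :
    (defLap A s *ᵥ v) u = (s ^ 2 * (∑ j, A u j - 1) + 1) * v u - s * (A *ᵥ v) u := by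
  simp only [defLap, degMat, add_mulVec, sub_mulVec, smul_mulVec, one_mulVec, mulVec_diagonal,
    Pi.add_apply, Pi.sub_apply, Pi.smul_apply, smul_eq_mul]
  ring

end

lemma sum_mul_mul_sub {ι : Type*} [Fintype ι] (x : ι → ℝ) (a c : ℝ) :
    ∑ i, x i * (a * x i - c) = a * ∑ i, x i ^ 2 - c * ∑ i, x i := by
  simp only [mul_sub, sum_sub_distrib, mul_sum]
  congr 1 <;> exact sum_congr rfl fun i _ => by ring

section bipAdj

variable {m n : ℕ}

lemma bipAdj_isSymm (m n : ℕ) : (bipAdj m n).IsSymm := by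
  ext u w
  simp only [bipAdj, transpose_apply, ne_comm]

lemma bipAdj_mulVec_inl (v : Fin m ⊕ Fin n → ℝ) (i : Fin m) :
    (bipAdj m n *ᵥ v) (Sum.inl i) = ∑ j, v (Sum.inr j) := by
  simp [bipAdj, mulVec, dotProduct, Fintype.sum_sum_type]

lemma bipAdj_mulVec_inr (v : Fin m ⊕ Fin n → ℝ) (j : Fin n) :
    (bipAdj m n *ᵥ v) (Sum.inr j) = ∑ i, v (Sum.inl i) := by
  simp [bipAdj, mulVec, dotProduct, Fintype.sum_sum_type]

lemma sum_bipAdj_inl (i : Fin m) : ∑ u, bipAdj m n (Sum.inl i) u = n := by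
  rw [Fintype.sum_sum_type]; simp [bipAdj]

lemma sum_bipAdj_inr (j : Fin n) : ∑ u, bipAdj m n (Sum.inr j) u = m := by
  rw [Fintype.sum_sum_type]; simp [bipAdj]

lemma dotProduct_defLap_bipAdj_mulVec (s : ℝ) (v : Fin m ⊕ Fin n → ℝ) :
    v ⬝ᵥ (defLap (bipAdj m n) s *ᵥ v) =
      (s ^ 2 * (n - 1) + 1) * ∑ i, v (Sum.inl i) ^ 2
        + (s ^ 2 * (m - 1) + 1) * ∑ j, v (Sum.inr j) ^ 2
        - 2 * s * (∑ i, v (Sum.inl i)) * ∑ j, v (Sum.inr j) := by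
  simp only [dotProduct, defLap_mulVec_apply]
  rw [Fintype.sum_sum_type]
  simp only [sum_bipAdj_inl, sum_bipAdj_inr, bipAdj_mulVec_inl, bipAdj_mulVec_inr,
    sum_mul_mul_sub]
  ring

end bipAdj

lemma two_mul_mul_lt_add_of_sq_le {a b p q s X Y Sx Sy : ℝ} (ha : 0 < a) (hb : 0 < b)
    (h : s ^ 2 * (p * q) < a * b) (hX : X ^ 2 ≤ p * Sx) (hY : Y ^ 2 ≤ q * Sy)
    (hSx : 0 ≤ Sx) (hSy : 0 ≤ Sy) (hS : 0 < Sx + Sy) :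
    2 * s * X * Y < a * Sx + b * Sy := by
  have hpos : 0 < a * Sx + b * Sy := by
    nlinarith [mul_nonneg ha.le hSx, mul_nonneg hb.le hSy, mul_pos ha hS, mul_pos hb hS]
  have hsq : (2 * s * X * Y) ^ 2 < (a * Sx + b * Sy) ^ 2 :=
    calc (2 * s * X * Y) ^ 2 = 4 * s ^ 2 * (X ^ 2 * Y ^ 2) := by ring
      _ ≤ 4 * s ^ 2 * ((p * Sx) * (q * Sy)) := by
        gcongr
        exact (sq_nonneg X).trans hX
      _ = 4 * (s ^ 2 * (p * q)) * (Sx * Sy) := by ring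
      _ < (a * Sx + b * Sy) ^ 2 := by
        rcases (mul_nonneg hSx hSy).eq_or_lt with h0 | h0
        · rw [← h0, mul_zero]; positivity
        · nlinarith [sq_nonneg (a * Sx - b * Sy)]
  exact (le_abs_self _).trans_lt (abs_lt_of_sq_lt_sq hsq hpos.le)

lemma sq_sum_le_card_mul_sum_sq_fin {k : ℕ} (x : Fin k → ℝ) :
    (∑ i, x i) ^ 2 ≤ k * ∑ i, x i ^ 2 := by
  simpa using sq_sum_le_card_mul_sum_sq (s := univ) (f := x)

theorem posDef_defLap_bipAdj {m n : ℕ} (hm : 1 ≤ m) (hn : 1 ≤ n) {s : ℝ}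
    (hs : 0 < ((m - 1) * (n - 1) * s ^ 2 - 1) * (s ^ 2 - 1)) :
    (defLap (bipAdj m n) s).PosDef := by
  refine posDef_iff_dotProduct_mulVec.mpr
    ⟨defLap_isHermitian (bipAdj_isSymm m n) s, fun v hv => ?_⟩
  have hm' : (1 : ℝ) ≤ m := by exact_mod_cast hm
  have hn' : (1 : ℝ) ≤ n := by exact_mod_cast hn
  have hv : 0 < ∑ i, v (Sum.inl i) ^ 2 + ∑ j, v (Sum.inr j) ^ 2 := by
    have := dotProduct_self_star_pos_iff.mpr hv
    simpa only [star_trivial, dotProduct, Fintype.sum_sum_type, ← sq] using this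
  rw [star_trivial, dotProduct_defLap_bipAdj_mulVec, sub_pos]
  have ha : 0 < s ^ 2 * ((n : ℝ) - 1) + 1 := by nlinarith [sq_nonneg s]
  have hb : 0 < s ^ 2 * ((m : ℝ) - 1) + 1 := by nlinarith [sq_nonneg s]
  exact two_mul_mul_lt_add_of_sq_le ha hb
    (by linear_combination hs) (sq_sum_le_card_mul_sum_sq_fin _)
    (sq_sum_le_card_mul_sum_sq_fin _) (sum_nonneg fun _ _ => sq_nonneg _)
    (sum_nonneg fun _ _ => sq_nonneg _) hv

theorem exists_dotProduct_defLap_bipAdj_mulVec_neg {m n : ℕ} (hm : 1 ≤ m) {s : ℝ}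
    (hs : ((m - 1) * (n - 1) * s ^ 2 - 1) * (s ^ 2 - 1) < 0) :
    ∃ v : Fin m ⊕ Fin n → ℝ, v ⬝ᵥ (defLap (bipAdj m n) s *ᵥ v) < 0 := by
  have hm' : (1 : ℝ) ≤ m := by exact_mod_cast hm
  set b : ℝ := s ^ 2 * ((m : ℝ) - 1) + 1
  have hb : 0 < b := by nlinarith [sq_nonneg s]
  -- On vectors constant (`x`, `y`) on the parts the form is `a m x² + b n y² − 2 s m n x y`;
  -- for `x = b` it is minimised at `y = s m`.
  refine ⟨Sum.elim (fun _ => b) (fun _ => s * m), ?_⟩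
  have hform : Sum.elim (fun _ => b) (fun _ => s * m) ⬝ᵥ (defLap (bipAdj m n) s *ᵥ
      Sum.elim (fun _ => b) (fun _ => s * m)) =
      m * b * (((m - 1) * (n - 1) * s ^ 2 - 1) * (s ^ 2 - 1)) := by
    simp only [dotProduct_defLap_bipAdj_mulVec, Sum.elim_inl, Sum.elim_inr, sum_const, card_univ,
      Fintype.card_fin, nsmul_eq_mul, b]
    ring
  rw [hform]
  exact mul_neg_of_pos_of_neg (by positivity) hs

lemma abs_lt_one_div_sqrt_iff {c s : ℝ} (hc : 0 < c) : |s| < 1 / √c ↔ c * s ^ 2 < 1 := by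
  rw [← Real.sqrt_sq_eq_abs, one_div, ← Real.sqrt_inv, Real.sqrt_lt_sqrt_iff (sq_nonneg s),
    ← one_div, lt_div_iff₀' hc]

lemma one_div_sqrt_lt_abs_iff {c s : ℝ} (hc : 0 < c) : 1 / √c < |s| ↔ 1 < c * s ^ 2 := by
  rw [← Real.sqrt_sq_eq_abs, one_div, ← Real.sqrt_inv, Real.sqrt_lt_sqrt_iff (inv_nonneg.2 hc.le),
    inv_lt_iff_one_lt_mul₀' hc]

/-- For the complete bipartite graph `K_{m,n}` (`m, n ≥ 2`): `Δ(s)` is positive definite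
for `|s| > 1` or `|s| < 1/√((m−1)(n−1))`, and for `1/√((m−1)(n−1)) < |s| < 1` there is
`v` with `vᵀ Δ(s) v < 0`. -/
theorem completeBipartite_defLap_stability (m n : ℕ) (hm : 2 ≤ m) (hn : 2 ≤ n) (s : ℝ) :
    ((1 < |s| ∨ |s| < 1 / Real.sqrt (((m : ℝ) - 1) * ((n : ℝ) - 1))) →
      (defLap (bipAdj m n) s).PosDef) ∧
    (1 / Real.sqrt (((m : ℝ) - 1) * ((n : ℝ) - 1)) < |s| → |s| < 1 →
      ∃ v : Fin m ⊕ Fin n → ℝ, v ⬝ᵥ (defLap (bipAdj m n) s *ᵥ v) < 0) := by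
  have hc : 1 ≤ ((m : ℝ) - 1) * ((n : ℝ) - 1) := by
    have hm' : (2 : ℝ) ≤ m := by exact_mod_cast hm
    have hn' : (2 : ℝ) ≤ n := by exact_mod_cast hn
    nlinarith
  have hc₀ : 0 < ((m : ℝ) - 1) * ((n : ℝ) - 1) := by linarith
  refine ⟨fun h => posDef_defLap_bipAdj (by omega) (by omega) ?_, fun h₁ h₂ => ?_⟩
  · rcases h with h | h
    · have hs : 1 < s ^ 2 := one_lt_sq_iff_one_lt_abs s |>.mpr h
      exact mul_pos (by nlinarith) (by linarith)
    · have hs : _ * s ^ 2 < 1 := (abs_lt_one_div_sqrt_iff hc₀).mp h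
      exact mul_pos_of_neg_of_neg (by linarith) (by nlinarith)
  · have hs : 1 < _ * s ^ 2 := (one_div_sqrt_lt_abs_iff hc₀).mp h₁
    refine exists_dotProduct_defLap_bipAdj_mulVec_neg (by omega) (mul_neg_of_pos_of_neg ?_ ?_)
    · linarith
    · linarith [(sq_lt_one_iff_abs_lt_one s).mpr h₂]
end
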